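/- For all n, k ≥ 0, [k]!_q · {n brace k}_q = ∑_{ω} q^{Inv*(ω)}, where the sum runs over all ordered set partitions ω of {1, …, n} into exactly k blocks. -/

import Mathlib

open Finset Polynomial

/-- The q-integer `[n]_q = 1 + q + ⋯ + q^(n-1)`. -/
def qInt {R : Type*} [CommSemiring R] (q : R) (n : ℕ) : R :=
  ∑ i ∈ Finset.range n, q ^ i

/-- The q-factorial `[n]!_q = [1]_q [2]_q ⋯ [n]_q`. -/
def qFact {R : Type*} [CommSemiring R] (q : R) (n : ℕ) : R :=
  ∏ i ∈ Finset.range n, qInt q (i + 1)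

/-- The Carlitz q-Stirling numbers of the second kind. -/
def qStirling {R : Type*} [CommSemiring R] (q : R) : ℕ → ℕ → R
  | 0, 0 => 1
  | 0, _ + 1 => 0
  | _ + 1, 0 => 0
  | n + 1, m + 1 => qStirling q n m + qInt q (m + 1) * qStirling q n (m + 1)

/-- `ω` is an ordered set partition of the finite set `S`. -/
def IsOrderedPartitionOf (S : Finset ℕ) (ω : List (Finset ℕ)) : Prop :=
  (∀ B ∈ ω, B.Nonempty) ∧ List.Pairwise (fun B C => Disjoint B C) ω ∧
    (∀ x, x ∈ S ↔ ∃ B ∈ ω, x ∈ B)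

/-- The inversion number `Inv*(ω)` of an ordered set partition. -/
def invStar (ω : List (Finset ℕ)) : ℕ :=
  ∑ p ∈ (Finset.range ω.length ×ˢ Finset.range ω.length).filter (fun p => p.1 < p.2),
    ((ω.getD p.1 ∅).filter (fun b => ∃ c ∈ ω.getD p.2 ∅, c < b)).card

/-!
Let `x` be larger than every element of `S`. Deleting `x` from an ordered partition of
`insert x S` into `k + 1` blocks either removes a singleton block `{x}` at position `i`, leaving
a partition of `S` into `k` blocks, or shrinks a bigger block at position `i`, leaving one into
`k + 1` blocks; conversely every such partition and every `i ≤ k` arise exactly once. Since `x`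
exceeds all other elements, the only inversions involving `x` are the pairs `(x, C)` with `C` to
the right of its block, `k - i` of them in both cases. Summing `q ^ (k - i)` over `i` gives the
factor `[k + 1]_q`, hence the recursion
`P(insert x S, k + 1) = [k + 1]_q (P(S, k) + P(S, k + 1))` for the generating polynomials,
which is the Carlitz recursion multiplied by `[k + 1]!_q`.
-/

theorem List.perm_modify {α : Type*} (l : List α) (f : α → α) {i : ℕ} (hi : i < l.length) :
    (l.modify i f).Perm (f l[i] :: l.eraseIdx i) := by
  rw [List.modify_eq_take_cons_drop hi, List.eraseIdx_eq_take_drop_succ]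
  exact List.perm_middle

theorem List.perm_getElem_cons_eraseIdx {α : Type*} (l : List α) {i : ℕ} (hi : i < l.length) :
    l.Perm (l[i] :: l.eraseIdx i) := by
  simpa using l.perm_modify id hi

theorem List.idxOf_insertIdx_self {α : Type*} [BEq α] [LawfulBEq α] {a : α} :
    ∀ {l : List α} {i : ℕ}, a ∉ l → i ≤ l.length → (l.insertIdx i a).idxOf a = i
  | _, 0, _, _ => by simp
  | b :: l, i + 1, ha, hi => by
    rw [List.mem_cons, not_or] at ha
    rw [List.insertIdx_succ_cons, List.idxOf_cons_ne _ (Ne.symm ha.1),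
      List.idxOf_insertIdx_self ha.2 (by simpa using hi)]

theorem List.modify_eq_self_of_getElem {α : Type*} {l : List α} {f : α → α} {i : ℕ}
    (hi : i < l.length) (h : f l[i] = l[i]) : l.modify i f = l := by
  refine List.ext_getElem (List.length_modify ..) fun j _ _ => ?_
  rw [List.getElem_modify]
  split_ifs with hij
  · subst hij; exact h
  · rfl

def pairInv (B C : Finset ℕ) : ℕ := #{b ∈ B | ∃ c ∈ C, c < b}

theorem pairInv_eq_zero {B C : Finset ℕ} (h : ∀ b ∈ B, ∀ c ∈ C, b ≤ c) : pairInv B C = 0 := by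
  rw [pairInv, card_eq_zero, filter_eq_empty_iff]
  rintro b hb ⟨c, hc, hcb⟩
  exact (h b hb c hc).not_gt hcb

theorem pairInv_insert_left {B C : Finset ℕ} {x : ℕ} (hxB : x ∉ B) (hxC : ∃ c ∈ C, c < x) :
    pairInv (insert x B) C = pairInv B C + 1 := by
  rw [pairInv, filter_insert, if_pos hxC, card_insert_of_notMem (fun h => hxB (mem_filter.1 h).1)]
  rfl

theorem pairInv_insert_right {B C : Finset ℕ} {x : ℕ} (h : ∀ b ∈ B, b ≤ x) :
    pairInv B (insert x C) = pairInv B C := by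
  unfold pairInv
  congr 1
  refine filter_congr fun b hb => ?_
  simp only [mem_insert, exists_eq_or_imp, or_iff_right_iff_imp]
  exact fun hxb => absurd (h b hb) hxb.not_ge

theorem pairInv_singleton_left {C : Finset ℕ} {x : ℕ} (hC : ∃ c ∈ C, c < x) :
    pairInv {x} C = 1 := by
  rw [← insert_empty, pairInv_insert_left (notMem_empty x) hC, pairInv_eq_zero (by simp)]

theorem List.sum_map_eq_sum_range_getD {α M : Type*} [AddCommMonoid M] (f : α → M)
    (l : List α) (d : α) : (l.map f).sum = ∑ j ∈ Finset.range l.length, f (l.getD j d) := by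
  induction l with
  | nil => simp
  | cons b l ih => simp [ih, Finset.sum_range_succ', add_comm]

theorem invStar_eq_sum_sum (ω : List (Finset ℕ)) :
    invStar ω = ∑ i ∈ range ω.length, ∑ j ∈ range ω.length,
      if i < j then pairInv (ω.getD i ∅) (ω.getD j ∅) else 0 := by
  rw [invStar, sum_filter, sum_product]
  rfl

theorem invStar_nil : invStar [] = 0 := rfl

theorem invStar_cons (B : Finset ℕ) (ω : List (Finset ℕ)) :
    invStar (B :: ω) = (ω.map (pairInv B)).sum + invStar ω := by
  simp [invStar_eq_sum_sum, List.sum_map_eq_sum_range_getD _ _ ∅, sum_range_succ', add_comm]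

theorem invStar_insertIdx_singleton {x : ℕ} {ω : List (Finset ℕ)} (hne : ∀ B ∈ ω, B.Nonempty)
    (hlt : ∀ B ∈ ω, ∀ b ∈ B, b < x) {i : ℕ} (hi : i ≤ ω.length) :
    invStar (ω.insertIdx i {x}) = invStar ω + (ω.length - i) := by
  induction ω generalizing i with
  | nil =>
    obtain rfl : i = 0 := by simpa using hi
    simp [invStar_cons]
  | cons B ω ih =>
    cases i with
    | zero =>
      have hx : ∀ C ∈ B :: ω, pairInv {x} C = 1 := fun C hC =>
        let ⟨c, hc⟩ := hne C hC
        pairInv_singleton_left ⟨c, hc, hlt C hC c hc⟩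
      simp [invStar_cons, List.map_congr_left hx, add_comm]
    | succ i =>
      simp only [List.forall_mem_cons] at hne hlt
      have hi : i ≤ ω.length := by simpa using hi
      have hB : pairInv B {x} = 0 := pairInv_eq_zero (by simpa using fun b hb => (hlt.1 b hb).le)
      rw [List.insertIdx_succ_cons, invStar_cons, invStar_cons,
        ((List.perm_insertIdx _ _ hi).map _).sum_eq, ih hne.2 hlt.2 hi]
      simp only [List.map_cons, List.sum_cons, hB, List.length_cons]
      omega

theorem invStar_modify_insert {x : ℕ} {ω : List (Finset ℕ)} (hne : ∀ B ∈ ω, B.Nonempty)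
    (hlt : ∀ B ∈ ω, ∀ b ∈ B, b < x) {i : ℕ} (hi : i < ω.length) :
    invStar (ω.modify i (insert x)) = invStar ω + (ω.length - 1 - i) := by
  induction ω generalizing i with
  | nil => simp at hi
  | cons B ω ih =>
    simp only [List.forall_mem_cons] at hne hlt
    cases i with
    | zero =>
      have hB : ∀ C ∈ ω, pairInv (insert x B) C = pairInv B C + 1 := fun C hC =>
        pairInv_insert_left (fun hx => (hlt.1 x hx).false)
          (let ⟨c, hc⟩ := hne.2 C hC; ⟨c, hc, hlt.2 C hC c hc⟩)
      simp [invStar_cons, List.map_congr_left hB, List.sum_map_add]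
      omega
    | succ i =>
      have hi : i < ω.length := by simpa using hi
      rw [List.modify_succ_cons, invStar_cons, invStar_cons, ih hne.2 hlt.2 hi,
        ((ω.perm_modify _ hi).map _).sum_eq, ((ω.perm_getElem_cons_eraseIdx hi).map _).sum_eq]
      simp only [List.map_cons, List.sum_cons, List.length_cons,
        pairInv_insert_right fun b hb => (hlt.1 b hb).le]
      omega

theorem isOrderedPartitionOf_iff_of_perm {S : Finset ℕ} {ω ω' : List (Finset ℕ)}
    (h : ω.Perm ω') : IsOrderedPartitionOf S ω ↔ IsOrderedPartitionOf S ω' := by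
  simp only [IsOrderedPartitionOf, h.mem_iff,
    h.pairwise_iff (R := fun B C => Disjoint B C) fun hd => hd.symm]

theorem IsOrderedPartitionOf.subset {S B : Finset ℕ} {ω : List (Finset ℕ)}
    (h : IsOrderedPartitionOf S ω) (hB : B ∈ ω) : B ⊆ S :=
  fun b hb => (h.2.2 b).2 ⟨B, hB, hb⟩

theorem isOrderedPartitionOf_nil_iff {S : Finset ℕ} : IsOrderedPartitionOf S [] ↔ S = ∅ := by
  simp [IsOrderedPartitionOf, eq_empty_iff_forall_notMem]

theorem isOrderedPartitionOf_cons_iff {S B : Finset ℕ} {ω : List (Finset ℕ)} :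
    IsOrderedPartitionOf S (B :: ω) ↔
      B.Nonempty ∧ B ⊆ S ∧ IsOrderedPartitionOf (S \ B) ω := by
  constructor
  · rintro ⟨hne, hdisj, hcover⟩
    simp only [List.forall_mem_cons, List.pairwise_cons, List.exists_mem_cons_iff]
      at hne hdisj hcover
    refine ⟨hne.1, fun b hb => (hcover b).2 (.inl hb), hne.2, hdisj.2, fun y => ?_⟩
    rw [mem_sdiff, hcover]
    constructor
    · rintro ⟨hy | hy, hyB⟩
      exacts [absurd hy hyB, hy]
    · rintro ⟨C, hC, hyC⟩
      exact ⟨.inr ⟨C, hC, hyC⟩, fun hyB => disjoint_left.1 (hdisj.1 C hC) hyB hyC⟩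
  · rintro ⟨hB, hBS, hω⟩
    refine ⟨List.forall_mem_cons.2 ⟨hB, hω.1⟩,
      List.pairwise_cons.2 ⟨fun C hC => ?_, hω.2.1⟩, fun y => ?_⟩
    · exact disjoint_of_subset_right (hω.subset hC) disjoint_sdiff
    · rw [List.exists_mem_cons_iff, ← hω.2.2, mem_sdiff]
      by_cases hyB : y ∈ B
      · simp [hyB, hBS hyB]
      · simp [hyB]

theorem isOrderedPartitionOf_insertIdx_singleton_iff {S : Finset ℕ} {ω : List (Finset ℕ)}
    {x i : ℕ} (hx : x ∉ S) (hi : i ≤ ω.length) :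
    IsOrderedPartitionOf (insert x S) (ω.insertIdx i {x}) ↔ IsOrderedPartitionOf S ω := by
  rw [isOrderedPartitionOf_iff_of_perm (List.perm_insertIdx _ _ hi), isOrderedPartitionOf_cons_iff,
    insert_sdiff_of_mem _ (mem_singleton_self x), sdiff_singleton_eq_erase, erase_eq_of_notMem hx]
  simp

theorem isOrderedPartitionOf_modify_insert_iff {S : Finset ℕ} {ω : List (Finset ℕ)}
    {x i : ℕ} (hx : x ∉ S) (hi : i < ω.length) (hxi : x ∉ ω[i]) (hne : ω[i].Nonempty) :
    IsOrderedPartitionOf (insert x S) (ω.modify i (insert x)) ↔ IsOrderedPartitionOf S ω := by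
  rw [isOrderedPartitionOf_iff_of_perm (ω.perm_modify _ hi),
    isOrderedPartitionOf_iff_of_perm (ω.perm_getElem_cons_eraseIdx hi),
    isOrderedPartitionOf_cons_iff, isOrderedPartitionOf_cons_iff, insert_subset_insert_iff hxi,
    insert_sdiff_insert, sdiff_insert_of_notMem hx]
  simp [hne]

theorem IsOrderedPartitionOf.lt_of_mem {S B : Finset ℕ} {ω : List (Finset ℕ)} {x : ℕ}
    (h : IsOrderedPartitionOf S ω) (hx : ∀ s ∈ S, s < x) (hB : B ∈ ω) : ∀ b ∈ B, b < x :=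
  fun b hb => hx b (h.subset hB hb)

theorem IsOrderedPartitionOf.notMem_of_notMem {S B : Finset ℕ} {ω : List (Finset ℕ)} {x : ℕ}
    (h : IsOrderedPartitionOf S ω) (hx : x ∉ S) (hB : B ∈ ω) : x ∉ B :=
  fun hxB => hx (h.subset hB hxB)

theorem IsOrderedPartitionOf.mem_getElem_findIdx {S : Finset ℕ} {ω : List (Finset ℕ)} {x : ℕ}
    (h : IsOrderedPartitionOf S ω) (hx : x ∈ S) :
    ∃ hi : ω.findIdx (x ∈ ·) < ω.length, x ∈ ω[ω.findIdx (x ∈ ·)] := by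
  have hi := List.findIdx_lt_length_of_exists (p := fun B => decide (x ∈ B))
    (by simpa using (h.2.2 x).1 hx)
  exact ⟨hi, by simpa using List.findIdx_getElem (w := hi)⟩

theorem setOf_isOrderedPartitionOf_finite (S : Finset ℕ) (k : ℕ) :
    {ω | IsOrderedPartitionOf S ω ∧ ω.length = k}.Finite := by
  refine ((List.finite_length_eq S.powerset k).image (List.map Subtype.val)).subset ?_
  rintro ω ⟨hω, rfl⟩
  refine ⟨ω.attach.map fun B => ⟨B.1, mem_powerset.2 (hω.subset B.2)⟩, by simp, ?_⟩
  simp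

noncomputable def orderedPartitions (S : Finset ℕ) (k : ℕ) : Finset (List (Finset ℕ)) :=
  (setOf_isOrderedPartitionOf_finite S k).toFinset

theorem mem_orderedPartitions {S : Finset ℕ} {k : ℕ} {ω : List (Finset ℕ)} :
    ω ∈ orderedPartitions S k ↔ IsOrderedPartitionOf S ω ∧ ω.length = k :=
  Set.Finite.mem_toFinset _

theorem orderedPartitions_empty_zero : orderedPartitions ∅ 0 = {[]} := by
  ext ω
  rw [mem_orderedPartitions, List.length_eq_zero_iff, mem_singleton]
  exact and_iff_right_of_imp fun h => h ▸ isOrderedPartitionOf_nil_iff.2 rfl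

theorem orderedPartitions_empty_succ (k : ℕ) : orderedPartitions ∅ (k + 1) = ∅ := by
  ext (_ | ⟨B, ω⟩)
  · simp [mem_orderedPartitions]
  · simpa [mem_orderedPartitions, isOrderedPartitionOf_cons_iff] using
      fun (hB : B.Nonempty) hB' _ _ => hB.ne_empty hB'

theorem orderedPartitions_zero {S : Finset ℕ} (hS : S.Nonempty) : orderedPartitions S 0 = ∅ := by
  ext ω
  rw [mem_orderedPartitions, List.length_eq_zero_iff]
  simpa using fun h (hω : ω = []) => hS.ne_empty (isOrderedPartitionOf_nil_iff.1 (hω ▸ h))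

theorem sum_orderedPartitions_insert_filter_singleton_mem {M : Type*} [AddCommMonoid M]
    (f : ℕ → M) {S : Finset ℕ} {x : ℕ} (hx : ∀ s ∈ S, s < x) (k : ℕ) :
    ∑ ω ∈ (orderedPartitions (insert x S) (k + 1)).filter ({x} ∈ ·), f (invStar ω) =
      ∑ p ∈ range (k + 1) ×ˢ orderedPartitions S k, f (invStar p.2 + (k - p.1)) := by
  have hxS : x ∉ S := fun h => (hx x h).false
  symm
  refine sum_nbij' (fun p => p.2.insertIdx p.1 {x})
    (fun ω => (ω.idxOf {x}, ω.eraseIdx (ω.idxOf {x}))) ?_ ?_ ?_ ?_ ?_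
  · rintro ⟨i, ω⟩ hp
    simp only [mem_product, mem_range, mem_orderedPartitions] at hp
    obtain ⟨hi, hω, rfl⟩ := hp
    have hi : i ≤ ω.length := by omega
    simp only [mem_filter, mem_orderedPartitions]
    exact ⟨⟨(isOrderedPartitionOf_insertIdx_singleton_iff hxS hi).2 hω,
      List.length_insertIdx_of_le_length hi _⟩,
      (List.perm_insertIdx _ _ hi).mem_iff.2 List.mem_cons_self⟩
  · intro ω hω
    simp only [mem_filter, mem_orderedPartitions] at hω
    obtain ⟨⟨hω, hlen⟩, hxω⟩ := hω
    have hi := List.idxOf_lt_length_iff.2 hxω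
    have hrec := List.insertIdx_eraseIdx_getElem hi
    rw [List.getElem_idxOf] at hrec
    simp only [mem_product, mem_range, mem_orderedPartitions, List.length_eraseIdx_of_lt hi]
    refine ⟨by omega, (isOrderedPartitionOf_insertIdx_singleton_iff hxS
      (by rw [List.length_eraseIdx_of_lt hi]; omega)).1 (hrec ▸ hω), by omega⟩
  · rintro ⟨i, ω⟩ hp
    simp only [mem_product, mem_range, mem_orderedPartitions] at hp
    obtain ⟨hi, hω, rfl⟩ := hp
    have hxω : {x} ∉ ω := fun h => hω.notMem_of_notMem hxS h (mem_singleton_self x)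
    simp [List.idxOf_insertIdx_self hxω (by omega : i ≤ ω.length)]
  · intro ω hω
    have hi := List.idxOf_lt_length_iff.2 (mem_filter.1 hω).2
    have hrec := List.insertIdx_eraseIdx_getElem hi
    rwa [List.getElem_idxOf] at hrec
  · rintro ⟨i, ω⟩ hp
    simp only [mem_product, mem_range, mem_orderedPartitions] at hp
    obtain ⟨hi, hω, rfl⟩ := hp
    rw [invStar_insertIdx_singleton hω.1 (fun B hB => hω.lt_of_mem hx hB) (by omega)]

theorem findIdx_mem_modify_insert {x i : ℕ} {ω : List (Finset ℕ)} (hx : ∀ B ∈ ω, x ∉ B)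
    (hi : i < ω.length) : (ω.modify i (insert x)).findIdx (x ∈ ·) = i := by
  rw [List.findIdx_eq (by simpa using hi)]
  refine ⟨by simp, fun j hj => ?_⟩
  simpa [List.getElem_modify, hj.ne'] using hx _ (List.getElem_mem _)

theorem sum_orderedPartitions_insert_filter_singleton_notMem {M : Type*} [AddCommMonoid M]
    (f : ℕ → M) {S : Finset ℕ} {x : ℕ} (hx : ∀ s ∈ S, s < x) (k : ℕ) :
    ∑ ω ∈ (orderedPartitions (insert x S) (k + 1)).filter ({x} ∉ ·), f (invStar ω) =
      ∑ p ∈ range (k + 1) ×ˢ orderedPartitions S (k + 1), f (invStar p.2 + (k - p.1)) := by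
  have hxS : x ∉ S := fun h => (hx x h).false
  symm
  refine sum_nbij' (fun p => p.2.modify p.1 (insert x))
    (fun ω => (ω.findIdx (x ∈ ·), ω.modify (ω.findIdx (x ∈ ·)) (·.erase x))) ?_ ?_ ?_ ?_ ?_
  · rintro ⟨i, ω⟩ hp
    simp only [mem_product, mem_range, mem_orderedPartitions] at hp
    obtain ⟨hi, hω, hlen⟩ := hp
    replace hi : i < ω.length := hlen ▸ hi
    have hxω : ∀ B ∈ ω, x ∉ B := fun B hB => hω.notMem_of_notMem hxS hB
    have hne : ω[i].Nonempty := hω.1 _ (List.getElem_mem _)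
    simp only [mem_filter, mem_orderedPartitions, List.length_modify]
    refine ⟨⟨(isOrderedPartitionOf_modify_insert_iff hxS hi
      (hxω _ (List.getElem_mem _)) hne).2 hω, hlen⟩, fun h => ?_⟩
    rcases List.mem_cons.1 ((ω.perm_modify _ hi).mem_iff.1 h) with h | h
    · obtain ⟨b, hb⟩ := hne
      have : b ∈ ({x} : Finset ℕ) := h ▸ mem_insert_of_mem hb
      exact hxω _ (List.getElem_mem _) (mem_singleton.1 this ▸ hb)
    · exact hxω _ (List.mem_of_mem_eraseIdx h) (mem_singleton_self x)
  · intro ω hω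
    simp only [mem_filter, mem_orderedPartitions] at hω
    obtain ⟨⟨hω, hlen⟩, hxω⟩ := hω
    obtain ⟨hi, hxi⟩ := hω.mem_getElem_findIdx (mem_insert_self x S)
    set j := ω.findIdx (x ∈ ·)
    have hrec : (ω.modify j (·.erase x)).modify j (insert x) = ω := by
      rw [List.modify_modify_eq, List.modify_eq_self_of_getElem hi (insert_erase hxi)]
    have hne : (ω[j].erase x).Nonempty := by
      rw [nonempty_iff_ne_empty, Ne, erase_eq_empty_iff, not_or]
      exact ⟨ne_empty_of_mem hxi, fun h => hxω (h ▸ List.getElem_mem hi)⟩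
    simp only [mem_product, mem_range, mem_orderedPartitions, List.length_modify]
    refine ⟨hlen ▸ hi, (isOrderedPartitionOf_modify_insert_iff hxS (by simpa using hi)
      (by simp) (by simpa using hne)).1 (hrec ▸ hω), hlen⟩
  · rintro ⟨i, ω⟩ hp
    simp only [mem_product, mem_range, mem_orderedPartitions] at hp
    obtain ⟨hi, hω, hlen⟩ := hp
    replace hi : i < ω.length := hlen ▸ hi
    have hxω : ∀ B ∈ ω, x ∉ B := fun B hB => hω.notMem_of_notMem hxS hB
    rw [findIdx_mem_modify_insert hxω hi, List.modify_modify_eq,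
      List.modify_eq_self_of_getElem hi (erase_insert (hxω _ (List.getElem_mem _)))]
  · intro ω hω
    obtain ⟨hi, hxi⟩ :=
      (mem_orderedPartitions.1 (mem_filter.1 hω).1).1.mem_getElem_findIdx (mem_insert_self x S)
    rw [List.modify_modify_eq, List.modify_eq_self_of_getElem hi (insert_erase hxi)]
  · rintro ⟨i, ω⟩ hp
    simp only [mem_product, mem_range, mem_orderedPartitions] at hp
    obtain ⟨hi, hω, hlen⟩ := hp
    replace hi : i < ω.length := hlen ▸ hi
    rw [invStar_modify_insert hω.1 (fun B hB => hω.lt_of_mem hx hB) hi, hlen]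
    rfl

theorem sum_range_product_pow_add {R α : Type*} [CommSemiring R] (q : R) (w : α → ℕ) (k : ℕ)
    (T : Finset α) :
    ∑ p ∈ range (k + 1) ×ˢ T, q ^ (w p.2 + (k - p.1)) = qInt q (k + 1) * ∑ a ∈ T, q ^ w a := by
  rw [sum_product, qInt, ← sum_range_reflect (q ^ ·), sum_mul_sum]
  refine sum_congr rfl fun i _ => sum_congr rfl fun a _ => ?_
  rw [pow_add, mul_comm, add_tsub_cancel_right]

theorem sum_orderedPartitions_insert {R : Type*} [CommSemiring R] (q : R) {S : Finset ℕ} {x : ℕ}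
    (hx : ∀ s ∈ S, s < x) (k : ℕ) :
    ∑ ω ∈ orderedPartitions (insert x S) (k + 1), q ^ invStar ω =
      qInt q (k + 1) * (∑ ω ∈ orderedPartitions S k, q ^ invStar ω +
        ∑ ω ∈ orderedPartitions S (k + 1), q ^ invStar ω) := by
  rw [← sum_filter_add_sum_filter_not _ ({x} ∈ ·),
    sum_orderedPartitions_insert_filter_singleton_mem (q ^ ·) hx,
    sum_orderedPartitions_insert_filter_singleton_notMem (q ^ ·) hx,
    sum_range_product_pow_add, sum_range_product_pow_add, mul_add]

theorem qFact_mul_qStirling_card_eq_sum {R : Type*} [CommSemiring R] (q : R) (S : Finset ℕ)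
    (k : ℕ) : qFact q k * qStirling q #S k = ∑ ω ∈ orderedPartitions S k, q ^ invStar ω := by
  induction S using Finset.induction_on_max generalizing k with
  | empty =>
    cases k with
    | zero => simp [qFact, qStirling, orderedPartitions_empty_zero, invStar_nil]
    | succ k => simp [qStirling, orderedPartitions_empty_succ]
  | insert x S hx ih =>
    rw [card_insert_of_notMem fun h => (hx x h).false]
    cases k with
    | zero => simp [qStirling, orderedPartitions_zero (insert_nonempty x S)]
    | succ k =>
      rw [sum_orderedPartitions_insert q hx, ← ih, ← ih, qStirling, qFact, prod_range_succ, ← qFact]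
      ring

theorem qFact_mul_qStirling_eq_sum_invStar (n k : ℕ) :
    qFact (Polynomial.X : Polynomial ℚ) k * qStirling (Polynomial.X : Polynomial ℚ) n k
      = ∑ᶠ ω ∈ {ω : List (Finset ℕ) |
            IsOrderedPartitionOf (Finset.Icc 1 n) ω ∧ ω.length = k},
          (Polynomial.X : Polynomial ℚ) ^ invStar ω := by
  rw [finsum_mem_eq_finite_toFinset_sum _ (setOf_isOrderedPartitionOf_finite _ k),
    ← orderedPartitions]
  simpa using qFact_mul_qStirling_card_eq_sum X (Icc 1 n) k
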